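/- Let A be a Boolean algebra generated by an ω-independent subset X. Then every ω-preserving function f from X into any Boolean algebra B extends to a unique homomorphism from A to B. -/

import Mathlib

open scoped Classical

variable {A : Type*}

/-- ω-independence: `⊥ ∉ X`, (⊥1), (⊥3). -/
def OmegaIndep [BooleanAlgebra A] (X : Set A) : Prop :=
  (⊥ : A) ∉ X ∧
  (∀ F : Finset A, F.Nonempty → ↑F ⊆ X → F.sup id ≠ ⊤) ∧
  (∀ F G : Finset A, F.Nonempty → G.Nonempty → ↑F ⊆ X → ↑G ⊆ X →
      F.inf id ≠ ⊥ → F.inf id ≤ G.sup id → (F ∩ G).Nonempty)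

/-- n-independence: `⊥ ∉ X`, (⊥1), (⊥2)_n, (⊥3); `n = ⊤` codes ω. -/
def NIndep [BooleanAlgebra A] (n : ℕ∞) (X : Set A) : Prop :=
  (⊥ : A) ∉ X ∧
  (∀ F : Finset A, F.Nonempty → ↑F ⊆ X → F.sup id ≠ ⊤) ∧
  (∀ F : Finset A, F.Nonempty → ↑F ⊆ X → F.inf id = ⊥ →
      ∃ F' ⊆ F, (F'.card : ℕ∞) ≤ n ∧ F'.inf id = ⊥) ∧
  (∀ F G : Finset A, F.Nonempty → G.Nonempty → ↑F ⊆ X → ↑G ⊆ X →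
      F.inf id ≠ ⊥ → F.inf id ≤ G.sup id → (F ∩ G).Nonempty)

/-- Elementary product `∏_{x ∈ R} x^{ε x}`. -/
def elemProd [BooleanAlgebra A] (R : Finset A) (ε : A → Bool) : A :=
  R.inf (fun x => if ε x then x else xᶜ)

/-- `f` is n-preserving on `X` (`n = ⊤` codes ω-preserving). -/
def NPreserving [BooleanAlgebra A] {B : Type*} [BooleanAlgebra B]
    (n : ℕ∞) (X : Set A) (f : A → B) : Prop :=
  ∀ F : Finset A, ↑F ⊆ X → (F.card : ℕ∞) ≤ n → F.inf id = ⊥ → F.inf f = ⊥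

/-- Membership in the subalgebra generated by `X`. -/
inductive Gen [BooleanAlgebra A] (X : Set A) : A → Prop
  | of {x : A} : x ∈ X → Gen X x
  | bot : Gen X ⊥
  | top : Gen X ⊤
  | inf {x y : A} : Gen X x → Gen X y → Gen X (x ⊓ y)
  | sup {x y : A} : Gen X x → Gen X y → Gen X (x ⊔ y)
  | compl {x : A} : Gen X x → Gen X xᶜ

/-- `X` generates the Boolean algebra `A`. -/
def Generates [BooleanAlgebra A] (X : Set A) : Prop := ∀ a : A, Gen X a

/-! Over a finite `R ⊆ X` the elements of the subalgebra generated by `R` are the joins of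
constituents `∏_{x ∈ S} x ⊓ ∏_{x ∈ R \ S} xᶜ`, and the constituents partition `⊤`, so joins, meets
and complements act on the sets of indices `S`. Replacing `x` by `f x` in every constituent is
therefore a homomorphism as soon as it is well defined, i.e. as soon as `f` kills every constituent
that vanishes in `A` (Sikorski's criterion). A vanishing constituent means `∏ S ≤ ∑ (R \ S)` with
`S` and `R \ S` disjoint; ω-independence forces `∏ S = ⊥`, and ω-preservation then gives
`∏ f[S] = ⊥`. Uniqueness holds because `X` generates `A`. -/

noncomputable section Constituent

variable {α β : Type*} [BooleanAlgebra β]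

/-- The elementary product `∏_{x ∈ R} (g x)^{[x ∈ S]}` with `b^1 = b`, `b^0 = bᶜ`;
only `S ∩ R` matters. -/
def constituent (g : α → β) (R S : Finset α) : β :=
  R.inf fun x => if x ∈ S then g x else (g x)ᶜ

def constituentSup (g : α → β) (R : Finset α) (P : Set (Finset α)) : β :=
  {S ∈ R.powerset | S ∈ P}.sup (constituent g R)

variable (g : α → β) {R R' S S' : Finset α} {P Q : Set (Finset α)}

lemma constituent_anti (S : Finset α) (h : R ⊆ R') : constituent g R' S ≤ constituent g R S :=
  Finset.inf_mono h

lemma constituent_congr (h : ∀ x ∈ R, x ∈ S ↔ x ∈ S') :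
    constituent g R S = constituent g R S' :=
  Finset.inf_congr rfl fun x hx => by simp only [h x hx]

lemma constituent_le_inf (hS : S ⊆ R) : constituent g R S ≤ S.inf g :=
  Finset.le_inf fun _ hx => (Finset.inf_le (hS hx)).trans_eq (if_pos hx)

lemma constituent_eq_inf_inf_compl (hS : S ⊆ R) :
    constituent g R S = S.inf g ⊓ (R \ S).inf fun x => (g x)ᶜ := by
  rw [constituent, ← Finset.union_sdiff_of_subset hS, Finset.inf_union,
    Finset.union_sdiff_of_subset hS]
  congr 1
  · exact Finset.inf_congr rfl fun x hx => if_pos hx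
  · exact Finset.inf_congr rfl fun x hx => if_neg (Finset.mem_sdiff.1 hx).2

lemma disjoint_constituent (h : S ∩ R ≠ S' ∩ R) :
    Disjoint (constituent g R S) (constituent g R S') := by
  obtain ⟨x, hxR, hx⟩ : ∃ x ∈ R, ¬(x ∈ S ↔ x ∈ S') := by
    by_contra! h'
    exact h (Finset.ext fun x => by simp only [Finset.mem_inter]; grind)
  refine Disjoint.mono (Finset.inf_le hxR) (Finset.inf_le hxR) ?_
  split_ifs <;> simp_all [disjoint_compl_left, disjoint_compl_right]

lemma sup_constituent_powerset (R : Finset α) : R.powerset.sup (constituent g R) = ⊤ := by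
  induction R using Finset.induction_on with
  | empty => simp [constituent]
  | insert x R hx ih =>
    have hout : ∀ S ∈ R.powerset,
        constituent g (insert x R) S = (g x)ᶜ ⊓ constituent g R S := fun S hS => by
      rw [constituent, Finset.inf_insert, if_neg fun h => hx (Finset.mem_powerset.1 hS h)]
      rfl
    have hin : ∀ S ∈ R.powerset,
        (constituent g (insert x R) ∘ insert x) S = g x ⊓ constituent g R S := fun S _ => by
      rw [Function.comp_apply, constituent, Finset.inf_insert,
        if_pos (Finset.mem_insert_self x S)]
      congr 1
      exact constituent_congr g fun y hy => by grind
    rw [Finset.powerset_insert, Finset.sup_union, Finset.sup_image, Finset.sup_congr rfl hout,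
      Finset.sup_congr rfl hin, ← Finset.sup_inf_distrib_left, ← Finset.sup_inf_distrib_left, ih,
      inf_top_eq, inf_top_eq, compl_sup_eq_top]

lemma constituentSup_univ (R : Finset α) : constituentSup g R Set.univ = ⊤ := by
  simpa [constituentSup] using sup_constituent_powerset g R

lemma constituentSup_empty (R : Finset α) : constituentSup g R ∅ = ⊥ := by
  simp [constituentSup]

lemma constituentSup_union :
    constituentSup g R (P ∪ Q) = constituentSup g R P ⊔ constituentSup g R Q := by
  simp only [constituentSup, Set.mem_union, Finset.filter_or, Finset.sup_union]

lemma disjoint_constituent_constituentSup (hS : S ⊆ R) (hSP : S ∉ P) :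
    Disjoint (constituent g R S) (constituentSup g R P) := by
  refine Finset.disjoint_sup_right.2 fun S' hS' => disjoint_constituent g ?_
  obtain ⟨hS'R, hS'P⟩ := Finset.mem_filter.1 hS'
  rw [Finset.inter_eq_left.2 hS, Finset.inter_eq_left.2 (Finset.mem_powerset.1 hS'R)]
  exact fun h => hSP (h ▸ hS'P)

lemma compl_constituentSup : (constituentSup g R P)ᶜ = constituentSup g R Pᶜ := by
  refine IsCompl.compl_eq ⟨Finset.disjoint_sup_left.2 fun S hS => ?_, codisjoint_iff.2 ?_⟩
  · obtain ⟨hSR, hSP⟩ := Finset.mem_filter.1 hS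
    exact disjoint_constituent_constituentSup g (Finset.mem_powerset.1 hSR) (not_not_intro hSP)
  · rw [← constituentSup_union, Set.union_compl_self, constituentSup_univ]

lemma constituentSup_inter :
    constituentSup g R (P ∩ Q) = constituentSup g R P ⊓ constituentSup g R Q := by
  apply compl_injective
  rw [compl_constituentSup, compl_inf, compl_constituentSup, compl_constituentSup,
    ← constituentSup_union, Set.compl_inter]

lemma constituentSup_preimage_inter (P : Set (Finset α)) (h : R ⊆ R') :
    constituentSup g R' ((· ∩ R) ⁻¹' P) = constituentSup g R P := by
  apply le_antisymm
  · refine Finset.sup_le fun S' hS' => ?_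
    have hmem : S' ∩ R ∈ {S ∈ R.powerset | S ∈ P} := Finset.mem_filter.2
      ⟨Finset.mem_powerset.2 Finset.inter_subset_right, (Finset.mem_filter.1 hS').2⟩
    calc constituent g R' S' ≤ constituent g R S' := constituent_anti g S' h
      _ = constituent g R (S' ∩ R) := constituent_congr g fun x hx => by simp [hx]
      _ ≤ constituentSup g R P := Finset.le_sup hmem
  · refine Finset.sup_le fun S hS => ?_
    obtain ⟨hSR, hSP⟩ := Finset.mem_filter.1 hS
    calc constituent g R S
          = R'.powerset.sup fun S' => constituent g R S ⊓ constituent g R' S' := by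
          rw [← Finset.sup_inf_distrib_left, sup_constituent_powerset, inf_top_eq]
      _ ≤ _ := Finset.sup_le fun S' hS' => ?_
    by_cases hS'S : S' ∩ R = S
    · refine inf_le_right.trans (Finset.le_sup (Finset.mem_filter.2 ⟨hS', ?_⟩))
      simpa [hS'S] using hSP
    · refine ((disjoint_constituent g ?_).mono_right (constituent_anti g S' h)).eq_bot.trans_le
        bot_le
      rwa [Finset.inter_eq_left.2 (Finset.mem_powerset.1 hSR), ne_comm]

lemma constituentSup_sup_constituentSup (R₁ R₂ : Finset α) (P₁ P₂ : Set (Finset α)) :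
    constituentSup g R₁ P₁ ⊔ constituentSup g R₂ P₂ =
      constituentSup g (R₁ ∪ R₂) ((· ∩ R₁) ⁻¹' P₁ ∪ (· ∩ R₂) ⁻¹' P₂) := by
  rw [constituentSup_union, constituentSup_preimage_inter g P₁ Finset.subset_union_left,
    constituentSup_preimage_inter g P₂ Finset.subset_union_right]

lemma constituentSup_inf_constituentSup (R₁ R₂ : Finset α) (P₁ P₂ : Set (Finset α)) :
    constituentSup g R₁ P₁ ⊓ constituentSup g R₂ P₂ =
      constituentSup g (R₁ ∪ R₂) ((· ∩ R₁) ⁻¹' P₁ ∩ (· ∩ R₂) ⁻¹' P₂) := by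
  rw [constituentSup_inter, constituentSup_preimage_inter g P₁ Finset.subset_union_left,
    constituentSup_preimage_inter g P₂ Finset.subset_union_right]

lemma constituentSup_singleton (x : α) : constituentSup g {x} {S | x ∈ S} = g x := by
  rw [constituentSup]
  convert Finset.sup_singleton (f := constituent g {x}) (b := {x}) using 2
  · ext S
    simp only [Finset.mem_filter, Finset.mem_powerset, Finset.subset_singleton_iff,
      Set.mem_ofPred_eq, Finset.mem_singleton]
    grind
  · rw [constituent, Finset.inf_singleton, if_pos (Finset.mem_singleton_self x)]

end Constituent

lemma Gen.exists_constituentSup_eq [BooleanAlgebra A] {X : Set A} {a : A} (ha : Gen X a) :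
    ∃ R : Finset A, ↑R ⊆ X ∧ ∃ P, a = constituentSup id R P := by
  induction ha with
  | of hx => exact ⟨{_}, by simpa using hx, _, (constituentSup_singleton id _).symm⟩
  | bot => exact ⟨∅, by simp, ∅, (constituentSup_empty id ∅).symm⟩
  | top => exact ⟨∅, by simp, Set.univ, (constituentSup_univ id ∅).symm⟩
  | inf _ _ ih₁ ih₂ =>
    obtain ⟨R₁, hR₁, P₁, rfl⟩ := ih₁
    obtain ⟨R₂, hR₂, P₂, rfl⟩ := ih₂
    exact ⟨R₁ ∪ R₂, (Finset.coe_union _ _).trans_subset (Set.union_subset hR₁ hR₂), _,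
      constituentSup_inf_constituentSup id R₁ R₂ P₁ P₂⟩
  | sup _ _ ih₁ ih₂ =>
    obtain ⟨R₁, hR₁, P₁, rfl⟩ := ih₁
    obtain ⟨R₂, hR₂, P₂, rfl⟩ := ih₂
    exact ⟨R₁ ∪ R₂, (Finset.coe_union _ _).trans_subset (Set.union_subset hR₁ hR₂), _,
      constituentSup_sup_constituentSup id R₁ R₂ P₁ P₂⟩
  | compl _ ih =>
    obtain ⟨R, hR, P, rfl⟩ := ih
    exact ⟨R, hR, Pᶜ, compl_constituentSup id⟩

lemma Gen.hom_eq [BooleanAlgebra A] {B : Type*} [BooleanAlgebra B] {X : Set A}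
    {g₁ g₂ : BoundedLatticeHom A B} (h : ∀ x ∈ X, g₁ x = g₂ x) {a : A} (ha : Gen X a) :
    g₁ a = g₂ a := by
  induction ha with
  | of hx => exact h _ hx
  | bot => simp
  | top => simp
  | inf _ _ ih₁ ih₂ => simp [ih₁, ih₂]
  | sup _ _ ih₁ ih₂ => simp [ih₁, ih₂]
  | compl _ ih => simp [ih]

section OmegaIndep

variable [BooleanAlgebra A] {B : Type*} [BooleanAlgebra B] {X : Set A} {f : A → B}

lemma OmegaIndep.inf_eq_bot_of_le_sup (hind : OmegaIndep X) {F G : Finset A} (hF : ↑F ⊆ X)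
    (hG : ↑G ⊆ X) (hFG : Disjoint F G) (h : F.inf id ≤ G.sup id) : F.inf id = ⊥ := by
  by_contra hne
  obtain rfl | hGne := G.eq_empty_or_nonempty
  · exact hne (le_bot_iff.1 h)
  obtain rfl | hFne := F.eq_empty_or_nonempty
  · exact hind.2.1 G hGne hG (top_le_iff.1 h)
  obtain ⟨x, hx⟩ := hind.2.2 F G hFne hGne hF hG hne h
  exact Finset.disjoint_left.1 hFG (Finset.mem_inter.1 hx).1 (Finset.mem_inter.1 hx).2

lemma constituent_eq_bot_of_omegaIndep (hind : OmegaIndep X) (hf : NPreserving ⊤ X f)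
    {R S : Finset A} (hR : ↑R ⊆ X) (hS : S ⊆ R) (h : constituent id R S = ⊥) :
    constituent f R S = ⊥ := by
  have hSX : ↑S ⊆ X := (Finset.coe_subset.2 hS).trans hR
  have hle : S.inf id ≤ (R \ S).sup id := by
    rwa [constituent_eq_inf_inf_compl id hS, ← Finset.compl_sup, ← disjoint_iff,
      disjoint_compl_right_iff] at h
  have hbot := OmegaIndep.inf_eq_bot_of_le_sup hind hSX
    ((Finset.coe_subset.2 Finset.sdiff_subset).trans hR) Finset.disjoint_sdiff hle
  exact le_bot_iff.1 ((constituent_le_inf f hS).trans_eq (hf S hSX le_top hbot))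

lemma constituentSup_le_of_le_of_omegaIndep (hind : OmegaIndep X) (hf : NPreserving ⊤ X f)
    {R : Finset A} {P Q : Set (Finset A)} (hR : ↑R ⊆ X)
    (h : constituentSup id R P ≤ constituentSup id R Q) :
    constituentSup f R P ≤ constituentSup f R Q := by
  refine Finset.sup_le fun S hS => ?_
  obtain ⟨hSR, hSP⟩ := Finset.mem_filter.1 hS
  by_cases hSQ : S ∈ Q
  · exact Finset.le_sup (Finset.mem_filter.2 ⟨hSR, hSQ⟩)
  · refine (constituent_eq_bot_of_omegaIndep hind hf hR (Finset.mem_powerset.1 hSR) ?_).trans_le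
      bot_le
    exact ((disjoint_constituent_constituentSup id (Finset.mem_powerset.1 hSR) hSQ).mono_right
      ((Finset.le_sup hS).trans h)).eq_bot_of_le le_rfl

lemma constituentSup_eq_of_eq_of_omegaIndep (hind : OmegaIndep X) (hf : NPreserving ⊤ X f)
    {R₁ R₂ : Finset A} {P₁ P₂ : Set (Finset A)} (hR₁ : ↑R₁ ⊆ X) (hR₂ : ↑R₂ ⊆ X)
    (h : constituentSup id R₁ P₁ = constituentSup id R₂ P₂) :
    constituentSup f R₁ P₁ = constituentSup f R₂ P₂ := by
  have hR : ↑(R₁ ∪ R₂) ⊆ X := (Finset.coe_union R₁ R₂).trans_subset (Set.union_subset hR₁ hR₂)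
  rw [← constituentSup_preimage_inter id P₁ Finset.subset_union_left,
    ← constituentSup_preimage_inter id P₂ (R' := R₁ ∪ R₂) Finset.subset_union_right] at h
  rw [← constituentSup_preimage_inter f P₁ Finset.subset_union_left,
    ← constituentSup_preimage_inter f P₂ (R' := R₁ ∪ R₂) Finset.subset_union_right]
  exact le_antisymm (constituentSup_le_of_le_of_omegaIndep hind hf hR h.le)
    (constituentSup_le_of_le_of_omegaIndep hind hf hR h.ge)

lemma exists_boundedLatticeHom_constituentSup (hgen : Generates X) (hind : OmegaIndep X)
    (hf : NPreserving ⊤ X f) : ∃ g : BoundedLatticeHom A B,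
      ∀ R P, ↑R ⊆ X → g (constituentSup id R P) = constituentSup f R P := by
  choose R hRX P hP using fun a => (hgen a).exists_constituentSup_eq
  have hg : ∀ a R' P', ↑R' ⊆ X → a = constituentSup id R' P' →
      constituentSup f (R a) (P a) = constituentSup f R' P' := fun a _ _ hR' ha =>
    constituentSup_eq_of_eq_of_omegaIndep hind hf (hRX a) hR' ((hP a).symm.trans ha)
  have hRX₂ : ∀ a b, ↑(R a ∪ R b) ⊆ X := fun a b =>
    (Finset.coe_union _ _).trans_subset (Set.union_subset (hRX a) (hRX b))
  refine ⟨{ toFun := fun a => constituentSup f (R a) (P a)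
            map_sup' := fun a b => ?_
            map_inf' := fun a b => ?_
            map_top' := ?_
            map_bot' := ?_ }, fun R' P' hR' => hg _ R' P' hR' rfl⟩
  · rw [constituentSup_sup_constituentSup]
    exact hg _ _ _ (hRX₂ a b) (by rw [← constituentSup_sup_constituentSup, ← hP a, ← hP b])
  · rw [constituentSup_inf_constituentSup]
    exact hg _ _ _ (hRX₂ a b) (by rw [← constituentSup_inf_constituentSup, ← hP a, ← hP b])
  · rw [← constituentSup_univ f ∅]
    exact hg _ _ _ (by simp) (constituentSup_univ id ∅).symm
  · rw [← constituentSup_empty f ∅]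
    exact hg _ _ _ (by simp) (constituentSup_empty id ∅).symm

end OmegaIndep

theorem stmt_7.{u, v} {A : Type u} [BooleanAlgebra A] (X : Set A)
    (hgen : Generates X) (hind : OmegaIndep X)
    {B : Type v} [BooleanAlgebra B] (f : A → B) (hf : NPreserving ⊤ X f) :
    ∃! g : BoundedLatticeHom A B, ∀ x ∈ X, g x = f x := by
  obtain ⟨g, hg⟩ := exists_boundedLatticeHom_constituentSup hgen hind hf
  have hgX : ∀ x ∈ X, g x = f x := fun x hx => by
    simpa only [constituentSup_singleton, id] using hg {x} {S | x ∈ S} (by simpa using hx)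
  exact ⟨g, hgX, fun g' hg' => BoundedLatticeHom.ext fun a =>
    (hgen a).hom_eq fun x hx => (hg' x hx).trans (hgX x hx).symm⟩
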